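/- Assume R is not small. Then the following six conditions are equivalent: (1a) there exists a nontrivial admissible function on R; (1b) there exists a nontrivial admissible function on R vanishing identically on R^ι; (2a) there exists a reduced admissible function on R; (2b) there exists a reduced admissible function on R vanishing identically on R^ι; (3a) the rank of Γ is at most ⌊#R/2⌋; (3b) the rank of Γ₁ is at most ⌊#R/2⌋. -/

import Mathlib

/-!
Since `‖α‖² = q`, the involution `α ↦ q / α` of `R` is complex conjugation. Hence `R` is the
disjoint union of its part `R⁺` in the open upper half-plane, the conjugate of `R⁺`, and its real
points, which are the `β` with `β² = q`; as `R` is not small there is at most one real point, so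
`#R⁺ = ⌊#R / 2⌋`. All six conditions are equivalent to `MulDependentModPow q R⁺`: some nontrivial
monomial in `R⁺` is a power of `q`.

* A nontrivial admissible `e` that is not conjugation invariant yields the relation with exponents
  `2 (e - e ∘ conj)` on `R⁺`. A conjugation invariant admissible `e` is trivial: taking absolute
  values gives `∑ e = 2 d`, so the exponent at the real point is even.
* A relation `∏ α ^ f α = q ^ c` yields the reduced function with exponent `f⁺` at `α ∈ R⁺` and
  `f⁻` at `conj α`; a reduced function is never trivial.
* Modulo torsion, `Γ` and `Γ₁` are generated by `q` and `R⁺` (as `conj α = q / α` and `β² = q`),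
  and `q` has infinite order, so their rank is at most `#R⁺` exactly when `q` and `R⁺` satisfy a
  relation that does not only involve `q`.
-/

open Finset TensorProduct

/-- `e` is admissible (of some degree) for `(q, R)`. -/
def AdmissibleFn (q : ℤ) (R : Finset ℂ) (e : ℂ → ℤ) : Prop :=
  ∃ d : ℤ, ∏ α ∈ R, α ^ e α = (q : ℂ) ^ d

/-- `e` is trivial for `(q, R)`. -/
def TrivialFn (q : ℤ) (R : Finset ℂ) (e : ℂ → ℤ) : Prop :=
  (∀ α ∈ R, e α = e ((q : ℂ) / α)) ∧ ∀ β ∈ R, β ^ 2 = (q : ℂ) → Even (e β)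

/-- `e` is a reduced admissible function for `(q, R)`. -/
def ReducedAdmissible (q : ℤ) (R : Finset ℂ) (e : ℂ → ℤ) : Prop :=
  ∃ d : ℤ, (∏ α ∈ R, α ^ e α = (q : ℂ) ^ d) ∧ 1 ≤ d ∧
    (∀ α ∈ R, 0 ≤ e α) ∧
    (∀ α ∈ R, α ^ 2 ≠ (q : ℂ) → e α = 0 ∨ e ((q : ℂ) / α) = 0) ∧
    (∀ β ∈ R, β ^ 2 = (q : ℂ) → e β = 0 ∨ e β = 1)

/-- The rank `dim_ℚ (G ⊗_ℤ ℚ)` of a subgroup `G` of `ℂˣ`. -/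
noncomputable def subgroupRank (G : Subgroup ℂˣ) : Cardinal :=
  Module.rank ℚ (ℚ ⊗[ℤ] Additive ↥G)

open ComplexConjugate

theorem rank_rat_tensor_eq_rank_int (M : Type*) [AddCommGroup M] :
    Module.rank ℚ (ℚ ⊗[ℤ] M) = Module.rank ℤ M := by
  have : IsLocalizedModule (nonZeroDivisors ℤ) (TensorProduct.mk ℤ ℚ M 1) :=
    (isLocalizedModule_iff_isBaseChange _ ℚ _).mpr (TensorProduct.isBaseChange ℤ M ℚ)
  rw [IsLocalization.rank_eq ℚ (nonZeroDivisors ℤ) le_rfl]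
  convert IsLocalizedModule.rank_eq (nonZeroDivisors ℤ) le_rfl (TensorProduct.mk ℤ ℚ M 1)
  exact Subsingleton.elim _ _

section Rank

variable {R M : Type*} [CommRing R] [IsDomain R] [AddCommGroup M] [Module R M]

theorem rank_le_of_forall_exists_smul_mem_span {s : Set M}
    (h : ∀ x : M, ∃ r : R, r ≠ 0 ∧ r • x ∈ Submodule.span R s) :
    Module.rank R M ≤ Cardinal.mk s := by
  have htorsion : Module.IsTorsion R (M ⧸ Submodule.span R s) := fun x ↦ by
    induction x using Submodule.Quotient.induction_on with | _ x
    obtain ⟨r, hr, hrx⟩ := h x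
    exact ⟨⟨r, mem_nonZeroDivisors_of_ne_zero hr⟩,
      (Submodule.Quotient.mk_eq_zero _).mpr hrx⟩
  rw [← Submodule.rank_quotient_add_rank (Submodule.span R s), htorsion.rank_eq_zero, zero_add]
  exact rank_span_le s

theorem rank_le_card_of_relation {ι : Type*} [Fintype ι] {m₀ : M} {v : ι → M}
    (hspan : ∀ x : M, ∃ r : R, r ≠ 0 ∧ r • x ∈ Submodule.span R (insert m₀ (Set.range v)))
    {a : ι → R} {c : R} (hrel : ∑ i, a i • v i = c • m₀) {i₀ : ι} (hi₀ : a i₀ ≠ 0) :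
    Module.rank R M ≤ Fintype.card ι := by
  classical
  set s : Finset M := insert m₀ ((univ.erase i₀).image v)
  have hcard : #s ≤ Fintype.card ι :=
    calc #s ≤ #((univ.erase i₀).image v) + 1 := card_insert_le _ _
      _ ≤ #(univ.erase i₀) + 1 := by gcongr; exact card_image_le
      _ = Fintype.card ι := by
        rw [card_erase_of_mem (mem_univ i₀), card_univ,
          Nat.sub_add_cancel (Fintype.card_pos_iff.mpr ⟨i₀⟩)]
  have hv : ∀ i ≠ i₀, v i ∈ Submodule.span R (s : Set M) := fun i hi ↦
    Submodule.subset_span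
      (mem_insert_of_mem (mem_image_of_mem v (mem_erase.mpr ⟨hi, mem_univ i⟩)))
  have hm₀ : m₀ ∈ Submodule.span R (s : Set M) := Submodule.subset_span (by simp [s])
  have hvi₀ : a i₀ • v i₀ ∈ Submodule.span R (s : Set M) := by
    rw [← add_sum_erase _ _ (mem_univ i₀)] at hrel
    rw [eq_sub_of_add_eq hrel]
    exact sub_mem (Submodule.smul_mem _ _ hm₀)
      (Submodule.sum_mem _ fun i hi ↦ Submodule.smul_mem _ _ (hv i (ne_of_mem_erase hi)))
  have hscaled : Submodule.span R (insert m₀ (Set.range v)) ≤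
      (Submodule.span R (s : Set M)).comap (a i₀ • LinearMap.id) := by
    rw [Submodule.span_le]
    rintro _ (rfl | ⟨i, rfl⟩)
    · exact Submodule.smul_mem _ _ hm₀
    · by_cases hi : i = i₀
      · subst hi; exact hvi₀
      · exact Submodule.smul_mem _ _ (hv i hi)
  calc Module.rank R M ≤ Cardinal.mk (s : Set M) :=
        rank_le_of_forall_exists_smul_mem_span fun x ↦ by
          obtain ⟨r, hr, hrx⟩ := hspan x
          exact ⟨a i₀ * r, mul_ne_zero hi₀ hr, by rw [mul_smul]; exact hscaled hrx⟩
    _ ≤ Fintype.card ι := by simpa using hcard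

end Rank

theorem exists_relation_of_rank_le_card {R M ι : Type*} [Ring R] [Nontrivial R] [AddCommGroup M]
    [Module R M] [Fintype ι] {m₀ : M} (v : ι → M)
    (hm₀ : ∀ r : R, r • m₀ = 0 → r = 0) (hrank : Module.rank R M ≤ Fintype.card ι) :
    ∃ a : ι → R, a ≠ 0 ∧ ∃ c : R, ∑ i, a i • v i = c • m₀ := by
  have hdep : ¬ LinearIndependent R (fun o : Option ι ↦ o.elim m₀ v) := by
    intro hli
    have := hli.cardinal_lift_le_rank.trans (Cardinal.lift_le.mpr hrank)
    simp at this
  obtain ⟨g, hg, o, ho⟩ := Fintype.not_linearIndependent_iff.mp hdep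
  rw [Fintype.sum_option] at hg
  refine ⟨fun i ↦ g (some i), fun ha ↦ ?_, -g none,
    by simpa [neg_smul, eq_neg_iff_add_eq_zero, add_comm] using hg⟩
  have hnone : g none = 0 :=
    hm₀ _ (by simpa [show ∀ i, g (some i) = 0 from congrFun ha] using hg)
  cases o with
  | none => exact ho hnone
  | some i => exact ho (congrFun ha i)

namespace Subgroup

variable {G : Type*} [CommGroup G] {Γ : Subgroup G}

theorem ofMul_mem_of_mem_closure {T : Set G} (hT : closure T ≤ Γ)
    {N : Submodule ℤ (Additive Γ)}
    (hN : ∀ t (ht : t ∈ T), Additive.ofMul (⟨t, hT (subset_closure ht)⟩ : Γ) ∈ N)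
    {g : G} (hg : g ∈ closure T) : Additive.ofMul (⟨g, hT hg⟩ : Γ) ∈ N := by
  induction hg using closure_induction with
  | mem t ht => exact hN t ht
  | one => exact N.zero_mem
  | mul x y _ _ hx hy => exact N.add_mem hx hy
  | inv x _ hx => exact N.neg_mem hx

theorem exists_zsmul_mem_of_forall_mem {X : Set G} {N : Submodule ℤ (Additive (closure X))}
    (hX : ∀ x (hx : x ∈ X), ∃ n : ℤ, n ≠ 0 ∧
      n • Additive.ofMul (⟨x, subset_closure hx⟩ : closure X) ∈ N)
    (y : Additive (closure X)) : ∃ n : ℤ, n ≠ 0 ∧ n • y ∈ N := by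
  suffices ∀ g (hg : g ∈ closure X), ∃ n : ℤ, n ≠ 0 ∧
      n • Additive.ofMul (⟨g, hg⟩ : closure X) ∈ N from this _ y.toMul.2
  intro g hg
  induction hg using closure_induction with
  | mem x hx => exact hX x hx
  | one => exact ⟨1, one_ne_zero, by rw [one_smul]; exact N.zero_mem⟩
  | mul x y hx hy ihx ihy =>
    obtain ⟨n, hn, hnx⟩ := ihx
    obtain ⟨m, hm, hmy⟩ := ihy
    refine ⟨n * m, mul_ne_zero hn hm, ?_⟩
    have hsplit : (n * m) • Additive.ofMul (⟨x * y, mul_mem hx hy⟩ : closure X) =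
        m • n • Additive.ofMul (⟨x, hx⟩ : closure X) +
          n • m • Additive.ofMul (⟨y, hy⟩ : closure X) := by
      rw [show (⟨x * y, mul_mem hx hy⟩ : closure X) = ⟨x, hx⟩ * ⟨y, hy⟩ from rfl, ofMul_mul,
        smul_add, mul_comm n m, mul_smul, mul_comm m n, mul_smul]
    rw [hsplit]
    exact N.add_mem (N.smul_mem m hnx) (N.smul_mem n hmy)
  | inv x hx ih =>
    obtain ⟨n, hn, hnx⟩ := ih
    refine ⟨n, hn, ?_⟩
    rw [show (⟨x⁻¹, inv_mem hx⟩ : closure X) = (⟨x, hx⟩ : closure X)⁻¹ from rfl, ofMul_inv,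
      smul_neg]
    exact N.neg_mem hnx

theorem rank_closure_le_card_iff {X : Set G} {q : G} (hq : ∀ n : ℤ, q ^ n = 1 → n = 0)
    {ι : Type*} [Fintype ι] {v : ι → G} (hqX : q ∈ closure X) (hvX : ∀ i, v i ∈ closure X)
    (hX : ∀ x ∈ X, ∃ n : ℤ, n ≠ 0 ∧ x ^ n ∈ closure (insert q (Set.range v))) :
    Module.rank ℤ (Additive (closure X)) ≤ Fintype.card ι ↔
      ∃ a : ι → ℤ, a ≠ 0 ∧ ∃ c : ℤ, ∏ i, v i ^ a i = q ^ c := by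
  let m₀ : Additive (closure X) := .ofMul ⟨q, hqX⟩
  let w : ι → Additive (closure X) := fun i ↦ .ofMul ⟨v i, hvX i⟩
  have hrel (a : ι → ℤ) (c : ℤ) : ∑ i, a i • w i = c • m₀ ↔ ∏ i, v i ^ a i = q ^ c := by
    rw [← Additive.toMul.injective.eq_iff, ← Subtype.val_inj]
    simp [m₀, w]
  have hle : closure (insert q (Set.range v)) ≤ closure X :=
    closure_le _ |>.mpr (Set.insert_subset hqX (Set.range_subset_iff.mpr hvX))
  have hspan (y : Additive (closure X)) :
      ∃ n : ℤ, n ≠ 0 ∧ n • y ∈ Submodule.span ℤ (insert m₀ (Set.range w)) := by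
    refine exists_zsmul_mem_of_forall_mem (fun x hx ↦ ?_) y
    obtain ⟨n, hn, hxn⟩ := hX x hx
    refine ⟨n, hn, ?_⟩
    refine ofMul_mem_of_mem_closure hle (fun t ht ↦ ?_) hxn
    rcases ht with rfl | ⟨i, rfl⟩
    · exact Submodule.subset_span (Set.mem_insert _ _)
    · exact Submodule.subset_span (Set.mem_insert_of_mem _ ⟨i, rfl⟩)
  constructor
  · intro hrank
    have hm₀ (c : ℤ) (hc : c • m₀ = 0) : c = 0 :=
      hq c (by simpa using ((hrel 0 c).mp (by simp [hc])).symm)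
    obtain ⟨a, ha, c, hac⟩ := exists_relation_of_rank_le_card w hm₀ hrank
    exact ⟨a, ha, c, (hrel a c).mp hac⟩
  · rintro ⟨a, ha, c, hac⟩
    obtain ⟨i₀, hi₀⟩ := Function.ne_iff.mp ha
    exact rank_le_card_of_relation hspan ((hrel a c).mpr hac) hi₀

end Subgroup

theorem Finset.prod_zpow_eq_zpow_sum₀ {ι G₀ : Type*} [CommGroupWithZero G₀] {a : G₀} (ha : a ≠ 0)
    (s : Finset ι) (f : ι → ℤ) : ∏ i ∈ s, a ^ f i = a ^ ∑ i ∈ s, f i := by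
  induction s using cons_induction with
  | empty => simp
  | cons i s hi ih => rw [prod_cons, sum_cons, ih, zpow_add₀ ha]

namespace Complex

theorem ofReal_div_eq_conj {q : ℝ} {α : ℂ} (h : ‖α‖ ^ 2 = q) : (q : ℂ) / α = conj α := by
  rcases eq_or_ne α 0 with rfl | hα
  · simp
  rw [← h, ofReal_pow, ← mul_conj', mul_div_cancel_left₀ _ hα]

theorem ne_zero_of_norm_sq_eq {q : ℝ} (hq : q ≠ 0) {α : ℂ} (h : ‖α‖ ^ 2 = q) : α ≠ 0 := by
  rintro rfl
  simp [eq_comm, hq] at h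

theorem sq_eq_ofReal_iff_im_eq_zero {q : ℝ} {α : ℂ} (h : ‖α‖ ^ 2 = q) :
    α ^ 2 = q ↔ α.im = 0 := by
  rcases eq_or_ne α 0 with rfl | hα
  · simp [← h]
  rw [← conj_eq_iff_im, ← h, ofReal_pow, ← mul_conj', sq, mul_right_inj' hα, eq_comm]

theorem intCast_zpow_eq_one_iff {q : ℤ} (hq : 1 < q) {n : ℤ} : (q : ℂ) ^ n = 1 ↔ n = 0 := by
  rw [← ofReal_intCast, ← ofReal_zpow, ofReal_eq_one,
    zpow_eq_one_iff_right₀ (by positivity) (by exact_mod_cast hq.ne')]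

end Complex

open Complex

@[to_additive]
theorem Finset.prod_eq_prod_im_pos_mul_prod_im_eq_zero {M : Type*} [CommMonoid M]
    {R : Finset ℂ} (hR : ∀ α ∈ R, conj α ∈ R) (g : ℂ → M) :
    ∏ α ∈ R, g α =
      (∏ α ∈ R with 0 < α.im, g α * g (conj α)) * ∏ α ∈ R with α.im = 0, g α := by
  have hneg : ∏ α ∈ R with 0 < α.im, g (conj α) = ∏ α ∈ R with α.im < 0, g α :=
    prod_nbij' (conj ·) (conj ·) (by simp +contextual [hR]) (by simp +contextual [hR])
      (by simp) (by simp) (by simp)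
  rw [prod_mul_distrib, hneg, prod_filter, prod_filter, prod_filter, ← prod_mul_distrib,
    ← prod_mul_distrib]
  refine prod_congr rfl fun α _ ↦ ?_
  rcases lt_trichotomy α.im 0 with h | h | h
  · simp [h, h.ne, lt_asymm h]
  · simp [h]
  · simp [h, h.ne', lt_asymm h]

section HalfPlanes

variable {q : ℝ} {R : Finset ℂ}

theorem card_eq_two_mul_card_im_pos_add (hR : ∀ α ∈ R, conj α ∈ R) :
    #R = 2 * #{α ∈ R | 0 < α.im} + #{α ∈ R | α.im = 0} := by
  have := sum_eq_sum_im_pos_add_sum_im_eq_zero hR (fun _ ↦ (1 : ℕ))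
  simp only [sum_const, smul_eq_mul] at this
  omega

theorem card_im_eq_zero_le_one (hq : q ≠ 0) (hnorm : ∀ α ∈ R, ‖α‖ ^ 2 = q)
    (hnotsmall : ∀ α₁ ∈ R, ∀ α₂ ∈ R, α₁ ≠ α₂ → ∀ n : ℕ, 0 < n → (α₁ / α₂) ^ n ≠ 1) :
    #{α ∈ R | α.im = 0} ≤ 1 := by
  refine card_le_one.mpr fun β₁ h₁ β₂ h₂ ↦ by_contra fun hne ↦ ?_
  rw [mem_filter] at h₁ h₂
  have hsq₁ := (sq_eq_ofReal_iff_im_eq_zero (hnorm β₁ h₁.1)).mpr h₁.2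
  have hsq₂ := (sq_eq_ofReal_iff_im_eq_zero (hnorm β₂ h₂.1)).mpr h₂.2
  refine hnotsmall β₁ h₁.1 β₂ h₂.1 hne 2 two_pos ?_
  rw [div_pow, hsq₁, hsq₂, div_self (ofReal_ne_zero.mpr hq)]

theorem sum_eq_two_mul_of_prod_zpow_eq (hq : 1 < q) (hnorm : ∀ α ∈ R, ‖α‖ ^ 2 = q)
    {e : ℂ → ℤ} {d : ℤ} (h : ∏ α ∈ R, α ^ e α = (q : ℂ) ^ d) : ∑ α ∈ R, e α = 2 * d := by
  have hnormSq := congrArg normSq h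
  simp only [map_prod, map_zpow₀, normSq_ofReal] at hnormSq
  rw [prod_congr rfl fun α hα ↦ by rw [normSq_eq_norm_sq, hnorm α hα],
    prod_zpow_eq_zpow_sum₀ (by positivity),
    ← pow_two, ← zpow_natCast, ← zpow_mul] at hnormSq
  exact zpow_right_injective₀ (by positivity) hq.ne' hnormSq

theorem prod_zpow_eq_prod_im_pos_mul (hq : q ≠ 0) (hR : ∀ α ∈ R, conj α ∈ R)
    (hnorm : ∀ α ∈ R, ‖α‖ ^ 2 = q) (e : ℂ → ℤ) :
    ∏ α ∈ R, α ^ e α =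
      (∏ α ∈ R with 0 < α.im, α ^ (e α - e (conj α))) *
        (q : ℂ) ^ (∑ α ∈ R with 0 < α.im, e (conj α)) *
          ∏ α ∈ R with α.im = 0, α ^ e α := by
  rw [prod_eq_prod_im_pos_mul_prod_im_eq_zero hR, ← prod_zpow_eq_zpow_sum₀ (ofReal_ne_zero.mpr hq),
    ← prod_mul_distrib]
  congr 1
  refine prod_congr rfl fun α hα ↦ ?_
  have hαR := (mem_filter.mp hα).1
  have hα := ne_zero_of_norm_sq_eq hq (hnorm α hαR)
  rw [← ofReal_div_eq_conj (hnorm α hαR), div_zpow, zpow_sub₀ hα]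
  ring

end HalfPlanes

def MulDependentModPow (q : ℂ) (S : Finset ℂ) : Prop :=
  ∃ f : ℂ → ℤ, (∃ c : ℤ, ∏ α ∈ S, α ^ f α = q ^ c) ∧ ∃ α ∈ S, f α ≠ 0

section Admissible

variable {q : ℤ} {R : Finset ℂ}

-- The factor `2` absorbs the real points: `β ^ (2 * k) = q ^ k` when `β ^ 2 = q`.
theorem exists_prod_im_pos_eq_zpow_of_admissibleFn (hq : q ≠ 0) (hR : ∀ α ∈ R, conj α ∈ R)
    (hnorm : ∀ α ∈ R, ‖α‖ ^ 2 = (q : ℝ)) {e : ℂ → ℤ} (he : AdmissibleFn q R e) :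
    ∃ c : ℤ, ∏ α ∈ R with 0 < α.im, α ^ (2 * (e α - e (conj α))) = (q : ℂ) ^ c := by
  obtain ⟨d, hd⟩ := he
  have hq' : (q : ℂ) ≠ 0 := Int.cast_ne_zero.mpr hq
  have hsquare : ∏ α ∈ R, α ^ (2 * e α) = (q : ℂ) ^ (2 * d) := by
    rw [mul_comm 2 d, zpow_mul, ← hd, ← prod_zpow]
    exact prod_congr rfl fun α _ ↦ by rw [← zpow_mul, mul_comm]
  have hreal : ∏ α ∈ R with α.im = 0, α ^ (2 * e α) =
      (q : ℂ) ^ ∑ α ∈ R with α.im = 0, e α := by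
    rw [← prod_zpow_eq_zpow_sum₀ hq']
    refine prod_congr rfl fun β hβ ↦ ?_
    rw [mem_filter] at hβ
    have hβq := (sq_eq_ofReal_iff_im_eq_zero (hnorm β hβ.1)).mpr hβ.2
    rw [zpow_mul, zpow_two, ← pow_two, hβq, ofReal_intCast]
  rw [prod_zpow_eq_prod_im_pos_mul (Int.cast_ne_zero.mpr hq) hR hnorm, hreal,
    ofReal_intCast] at hsquare
  refine ⟨2 * d - (∑ α ∈ R with 0 < α.im, 2 * e (conj α)) - ∑ α ∈ R with α.im = 0, e α, ?_⟩
  rw [zpow_sub₀ hq', zpow_sub₀ hq', ← hsquare]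
  simp only [mul_sub]
  field_simp

theorem trivialFn_of_forall_eq_conj (hq : 1 < q) (hR : ∀ α ∈ R, conj α ∈ R)
    (hnorm : ∀ α ∈ R, ‖α‖ ^ 2 = (q : ℝ))
    (hnotsmall : ∀ α₁ ∈ R, ∀ α₂ ∈ R, α₁ ≠ α₂ → ∀ n : ℕ, 0 < n → (α₁ / α₂) ^ n ≠ 1)
    {e : ℂ → ℤ} (he : AdmissibleFn q R e) (hsymm : ∀ α ∈ R, e α = e (conj α)) :
    TrivialFn q R e := by
  have hdiv (α) (hα : α ∈ R) : (q : ℂ) / α = conj α := by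
    rw [← ofReal_intCast, ofReal_div_eq_conj (hnorm α hα)]
  refine ⟨fun α hα ↦ hdiv α hα ▸ hsymm α hα, fun β hβ hβq ↦ ?_⟩
  obtain ⟨d, hd⟩ := he
  have hsum := sum_eq_two_mul_of_prod_zpow_eq (by exact_mod_cast hq) hnorm
    (by rwa [ofReal_intCast])
  have hβreal : β ∈ {α ∈ R | α.im = 0} :=
    mem_filter.mpr ⟨hβ, (sq_eq_ofReal_iff_im_eq_zero (hnorm β hβ)).mp (by rwa [ofReal_intCast])⟩
  have hreal : {α ∈ R | α.im = 0} = {β} :=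
    eq_singleton_iff_unique_mem.mpr ⟨hβreal, fun x hx ↦ card_le_one.mp
      (card_im_eq_zero_le_one (by exact_mod_cast (zero_lt_one.trans hq).ne') hnorm hnotsmall)
        x hx β hβreal⟩
  have hpairs : ∑ α ∈ R with 0 < α.im, (e α + e (conj α)) =
      2 * ∑ α ∈ R with 0 < α.im, e α := by
    rw [mul_sum]
    exact sum_congr rfl fun α hα ↦ by rw [← hsymm α (mem_filter.mp hα).1]; ring
  rw [sum_eq_sum_im_pos_add_sum_im_eq_zero hR, hreal, sum_singleton, hpairs] at hsum
  exact ⟨d - ∑ α ∈ R with 0 < α.im, e α, by omega⟩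

theorem mulDependentModPow_of_admissibleFn (hq : 1 < q) (hR : ∀ α ∈ R, conj α ∈ R)
    (hnorm : ∀ α ∈ R, ‖α‖ ^ 2 = (q : ℝ))
    (hnotsmall : ∀ α₁ ∈ R, ∀ α₂ ∈ R, α₁ ≠ α₂ → ∀ n : ℕ, 0 < n → (α₁ / α₂) ^ n ≠ 1)
    {e : ℂ → ℤ} (he : AdmissibleFn q R e) (hnt : ¬ TrivialFn q R e) :
    MulDependentModPow q {α ∈ R | 0 < α.im} := by
  obtain ⟨α, hα, hne⟩ : ∃ α ∈ R, e α ≠ e (conj α) := by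
    by_contra! h
    exact hnt (trivialFn_of_forall_eq_conj hq hR hnorm hnotsmall he h)
  refine ⟨fun α ↦ 2 * (e α - e (conj α)),
    exists_prod_im_pos_eq_zpow_of_admissibleFn (by omega) hR hnorm he, ?_⟩
  rcases lt_trichotomy α.im 0 with him | him | him
  · refine ⟨conj α, mem_filter.mpr ⟨hR α hα, by simpa using him⟩, ?_⟩
    show 2 * (e (conj α) - e (conj (conj α))) ≠ 0
    rw [conj_conj]
    omega
  · exact absurd (congrArg e (conj_eq_iff_im.mpr him).symm) hne
  · exact ⟨α, mem_filter.mpr ⟨hα, him⟩, show 2 * (e α - e (conj α)) ≠ 0 by omega⟩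

theorem ReducedAdmissible.admissibleFn {e : ℂ → ℤ} (h : ReducedAdmissible q R e) :
    AdmissibleFn q R e :=
  let ⟨d, hd, _⟩ := h; ⟨d, hd⟩

theorem ReducedAdmissible.not_trivialFn (hq : 1 < q) {e : ℂ → ℤ} (h : ReducedAdmissible q R e) :
    ¬ TrivialFn q R e := by
  rintro ⟨hsymm, heven⟩
  obtain ⟨d, hd, hd1, -, hpair, hreal⟩ := h
  have hzero (α) (hα : α ∈ R) : e α = 0 := by
    by_cases hαq : α ^ 2 = q
    · exact (hreal α hα hαq).resolve_right fun h ↦ Int.not_even_one (h ▸ heven α hα hαq)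
    · exact (hpair α hα hαq).elim id fun h ↦ (hsymm α hα).trans h
  rw [prod_eq_one fun α hα ↦ by rw [hzero α hα, zpow_zero], eq_comm,
    intCast_zpow_eq_one_iff hq] at hd
  omega

end Admissible

noncomputable def reducedOf (f : ℂ → ℤ) (α : ℂ) : ℤ :=
  if 0 < α.im then (f α)⁺ else if α.im < 0 then (f (conj α))⁻ else 0

section ReducedOf

variable (f : ℂ → ℤ) {α : ℂ}

theorem reducedOf_of_im_pos (h : 0 < α.im) : reducedOf f α = (f α)⁺ := if_pos h

theorem reducedOf_conj_of_im_pos (h : 0 < α.im) : reducedOf f (conj α) = (f α)⁻ := by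
  simp [reducedOf, h, lt_asymm h]

theorem reducedOf_of_im_eq_zero (h : α.im = 0) : reducedOf f α = 0 := by
  simp [reducedOf, h]

theorem reducedOf_nonneg (α : ℂ) : 0 ≤ reducedOf f α := by
  unfold reducedOf
  split_ifs
  exacts [posPart_nonneg _, negPart_nonneg _, le_rfl]

end ReducedOf

section Reduced

variable {q : ℤ} {R : Finset ℂ}

theorem prod_zpow_reducedOf (hq : q ≠ 0) (hR : ∀ α ∈ R, conj α ∈ R)
    (hnorm : ∀ α ∈ R, ‖α‖ ^ 2 = (q : ℝ)) {f : ℂ → ℤ} {c : ℤ}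
    (hc : ∏ α ∈ R with 0 < α.im, α ^ f α = (q : ℂ) ^ c) :
    ∏ α ∈ R, α ^ reducedOf f α = (q : ℂ) ^ (c + ∑ α ∈ R with 0 < α.im, (f α)⁻) := by
  have hpos : ∏ α ∈ R with 0 < α.im, α ^ (reducedOf f α - reducedOf f (conj α)) =
      ∏ α ∈ R with 0 < α.im, α ^ f α := prod_congr rfl fun α hα ↦ by
    have h := (mem_filter.mp hα).2
    rw [reducedOf_of_im_pos f h, reducedOf_conj_of_im_pos f h, posPart_sub_negPart]
  have hneg : ∑ α ∈ R with 0 < α.im, reducedOf f (conj α) =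
      ∑ α ∈ R with 0 < α.im, (f α)⁻ :=
    sum_congr rfl fun α hα ↦ reducedOf_conj_of_im_pos f (mem_filter.mp hα).2
  have hreal : ∏ α ∈ R with α.im = 0, α ^ reducedOf f α = 1 := prod_eq_one fun β hβ ↦ by
    rw [reducedOf_of_im_eq_zero f (mem_filter.mp hβ).2, zpow_zero]
  rw [prod_zpow_eq_prod_im_pos_mul (Int.cast_ne_zero.mpr hq) hR hnorm, ofReal_intCast, hpos,
    hneg, hreal, hc, mul_one, zpow_add₀ (Int.cast_ne_zero.mpr hq)]

theorem sum_reducedOf (hR : ∀ α ∈ R, conj α ∈ R) (f : ℂ → ℤ) :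
    ∑ α ∈ R, reducedOf f α = ∑ α ∈ R with 0 < α.im, |f α| := by
  rw [sum_eq_sum_im_pos_add_sum_im_eq_zero hR,
    sum_eq_zero fun β hβ ↦ reducedOf_of_im_eq_zero f (mem_filter.mp hβ).2, add_zero]
  refine sum_congr rfl fun α hα ↦ ?_
  have h := (mem_filter.mp hα).2
  rw [reducedOf_of_im_pos f h, reducedOf_conj_of_im_pos f h, posPart_add_negPart]

theorem exists_reducedAdmissible_of_mulDependentModPow (hq : 1 < q)
    (hR : ∀ α ∈ R, conj α ∈ R) (hnorm : ∀ α ∈ R, ‖α‖ ^ 2 = (q : ℝ))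
    (h : MulDependentModPow q {α ∈ R | 0 < α.im}) :
    ∃ e, ReducedAdmissible q R e ∧ ∀ β ∈ R, β ^ 2 = (q : ℂ) → e β = 0 := by
  obtain ⟨f, ⟨c, hc⟩, α₀, hα₀, hfα₀⟩ := h
  have hprod := prod_zpow_reducedOf (by omega) hR hnorm hc
  have hdeg : 1 ≤ c + ∑ α ∈ R with 0 < α.im, (f α)⁻ := by
    have hsum := sum_eq_two_mul_of_prod_zpow_eq (by exact_mod_cast hq) hnorm
      (by rwa [ofReal_intCast])
    rw [sum_reducedOf hR] at hsum
    have := single_le_sum (fun α _ ↦ abs_nonneg (f α)) hα₀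
    have := abs_pos.mpr hfα₀
    omega
  have him (α) (hα : α ∈ R) : α ^ 2 = (q : ℂ) ↔ α.im = 0 := by
    rw [← ofReal_intCast]; exact sq_eq_ofReal_iff_im_eq_zero (hnorm α hα)
  have hreal (β) (hβ : β ∈ R) (hβq : β ^ 2 = (q : ℂ)) : reducedOf f β = 0 :=
    reducedOf_of_im_eq_zero f ((him β hβ).mp hβq)
  refine ⟨reducedOf f, ⟨_, hprod, hdeg, fun α _ ↦ reducedOf_nonneg f α, fun α hα hαq ↦ ?_,
    fun β hβ hβq ↦ .inl (hreal β hβ hβq)⟩, hreal⟩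
  rw [← ofReal_intCast, ofReal_div_eq_conj (hnorm α hα)]
  rcases lt_or_gt_of_ne (mt (him α hα).mpr hαq) with h | h
  · obtain ⟨γ, hγ, rfl⟩ : ∃ γ, 0 < γ.im ∧ conj γ = α := ⟨conj α, by simpa using h, conj_conj α⟩
    rw [reducedOf_conj_of_im_pos f hγ, conj_conj, reducedOf_of_im_pos f hγ,
      negPart_eq_zero, posPart_eq_zero]
    exact (le_total 0 (f γ))
  · rw [reducedOf_of_im_pos f h, reducedOf_conj_of_im_pos f h, posPart_eq_zero, negPart_eq_zero]
    exact le_total (f α) 0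

end Reduced

theorem mulDependentModPow_iff {q : ℂ} {S : Finset ℂ} :
    MulDependentModPow q S ↔ ∃ a : S → ℤ, a ≠ 0 ∧ ∃ c : ℤ, ∏ α : S, (α : ℂ) ^ a α = q ^ c := by
  constructor
  · rintro ⟨f, ⟨c, hc⟩, α, hα, hfα⟩
    exact ⟨fun β ↦ f β, Function.ne_iff.mpr ⟨⟨α, hα⟩, hfα⟩, c, by
      rw [← hc, prod_coe_sort S fun β ↦ β ^ f β]⟩
  · rintro ⟨a, ha, c, hc⟩
    obtain ⟨α, hα⟩ := Function.ne_iff.mp ha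
    refine ⟨fun z ↦ if h : z ∈ S then a ⟨z, h⟩ else 0, ⟨c, ?_⟩, α, α.2, by simpa using hα⟩
    rw [← hc, ← prod_attach S, ← univ_eq_attach]
    exact prod_congr rfl fun β _ ↦ by simp only [dif_pos β.2]

theorem exists_zpow_mem_closure_of_mem {q : ℤ} {R : Finset ℂ} (hR : ∀ α ∈ R, conj α ∈ R)
    (hnorm : ∀ α ∈ R, ‖α‖ ^ 2 = (q : ℝ)) {qu : ℂˣ} (hqu : (qu : ℂ) = q)
    {v : {α ∈ R | 0 < α.im} → ℂˣ} (hv : ∀ α, (v α : ℂ) = α) {x : ℂˣ}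
    (hx : (x : ℂ) = q ∨ (x : ℂ) ∈ R) :
    ∃ n : ℤ, n ≠ 0 ∧ x ^ n ∈ Subgroup.closure (insert qu (Set.range v)) := by
  have hq_mem : qu ∈ Subgroup.closure (insert qu (Set.range v)) :=
    Subgroup.subset_closure (Set.mem_insert _ _)
  have hv_mem (α) : v α ∈ Subgroup.closure (insert qu (Set.range v)) :=
    Subgroup.subset_closure (Set.mem_insert_of_mem _ ⟨α, rfl⟩)
  rcases hx with hxq | hxR
  · exact ⟨1, one_ne_zero, by rwa [zpow_one, Units.ext (hxq.trans hqu.symm)]⟩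
  rcases lt_trichotomy (x : ℂ).im 0 with him | him | him
  · have hc : conj (x : ℂ) ∈ {α ∈ R | 0 < α.im} :=
      mem_filter.mpr ⟨hR _ hxR, by simpa using him⟩
    refine ⟨1, one_ne_zero, ?_⟩
    rw [zpow_one, show x = qu * (v ⟨_, hc⟩)⁻¹ from Units.ext ?_]
    · exact mul_mem hq_mem (inv_mem (hv_mem _))
    rw [Units.val_mul, Units.val_inv_eq_inv_val, hv, hqu, ← div_eq_mul_inv,
      eq_div_iff ((map_ne_zero _).mpr x.ne_zero), mul_conj', ← ofReal_pow, hnorm _ hxR,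
      ofReal_intCast]
  · refine ⟨2, two_ne_zero, ?_⟩
    rw [show x ^ (2 : ℤ) = qu from Units.ext ?_]
    · exact hq_mem
    simpa [hqu] using (sq_eq_ofReal_iff_im_eq_zero (hnorm _ hxR)).mpr him
  · refine ⟨1, one_ne_zero, ?_⟩
    rw [zpow_one, Units.ext ((hv ⟨x, mem_filter.mpr ⟨hxR, him⟩⟩).symm)]
    exact hv_mem _

theorem subgroupRank_closure_le_iff {q : ℤ} (hq : 1 < q) {R : Finset ℂ}
    (hR : ∀ α ∈ R, conj α ∈ R) (hnorm : ∀ α ∈ R, ‖α‖ ^ 2 = (q : ℝ)) {X : Set ℂˣ}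
    (hqX : ∀ u : ℂˣ, (u : ℂ) = q → u ∈ Subgroup.closure X)
    (hRX : ∀ u : ℂˣ, (u : ℂ) ∈ R → 0 < (u : ℂ).im → u ∈ Subgroup.closure X)
    (hX : ∀ x ∈ X, (x : ℂ) = q ∨ (x : ℂ) ∈ R) :
    subgroupRank (Subgroup.closure X) ≤ #{α ∈ R | 0 < α.im} ↔
      MulDependentModPow q {α ∈ R | 0 < α.im} := by
  set S := {α ∈ R | 0 < α.im}
  have hq0 : (q : ℂ) ≠ 0 := Int.cast_ne_zero.mpr (by omega)
  have hne (α) (hα : α ∈ R) : α ≠ 0 :=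
    ne_zero_of_norm_sq_eq (by exact_mod_cast (zero_lt_one.trans hq).ne') (hnorm α hα)
  let qu : ℂˣ := Units.mk0 q hq0
  let v : S → ℂˣ := fun α ↦ Units.mk0 α (hne α (mem_filter.mp α.2).1)
  have hqu (n : ℤ) (h : qu ^ n = 1) : n = 0 :=
    (intCast_zpow_eq_one_iff hq).mp (by simpa [qu] using congrArg Units.val h)
  rw [subgroupRank, rank_rat_tensor_eq_rank_int, ← Fintype.card_coe S,
    Subgroup.rank_closure_le_card_iff hqu (hqX qu rfl)
      (fun α ↦ hRX (v α) (mem_filter.mp α.2).1 (mem_filter.mp α.2).2)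
      (fun x hx ↦ exists_zpow_mem_closure_of_mem hR hnorm rfl (fun _ ↦ rfl) (hX x hx)),
    mulDependentModPow_iff]
  simp [← Units.val_inj, qu, v]

theorem subgroupRank_closure_preimage_le_iff {q : ℤ} (hq : 1 < q) {R : Finset ℂ}
    (hRne : R.Nonempty) (hR : ∀ α ∈ R, conj α ∈ R) (hnorm : ∀ α ∈ R, ‖α‖ ^ 2 = (q : ℝ)) :
    subgroupRank (Subgroup.closure {x : ℂˣ | (x : ℂ) ∈ R}) ≤ #{α ∈ R | 0 < α.im} ↔
      MulDependentModPow q {α ∈ R | 0 < α.im} := by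
  refine subgroupRank_closure_le_iff hq hR hnorm (fun u hu ↦ ?_)
    (fun u hu _ ↦ Subgroup.subset_closure hu) (fun x hx ↦ .inr hx)
  obtain ⟨ρ, hρ⟩ := hRne
  have hρ0 := ne_zero_of_norm_sq_eq (by exact_mod_cast (zero_lt_one.trans hq).ne') (hnorm ρ hρ)
  rw [show u = Units.mk0 ρ hρ0 * Units.mk0 (conj ρ) ((map_ne_zero _).mpr hρ0) from
    Units.ext (by simp [hu, mul_conj', ← ofReal_pow, hnorm ρ hρ])]
  exact mul_mem (Subgroup.subset_closure hρ) (Subgroup.subset_closure (hR ρ hρ))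

theorem subgroupRank_closure_nonreal_le_iff {q : ℤ} (hq : 1 < q) {R : Finset ℂ}
    (hR : ∀ α ∈ R, conj α ∈ R) (hnorm : ∀ α ∈ R, ‖α‖ ^ 2 = (q : ℝ)) :
    subgroupRank (Subgroup.closure
        {x : ℂˣ | (x : ℂ) = (q : ℂ) ∨ ((x : ℂ) ∈ R ∧ (x : ℂ) ^ 2 ≠ (q : ℂ))}) ≤
        #{α ∈ R | 0 < α.im} ↔
      MulDependentModPow q {α ∈ R | 0 < α.im} := by
  refine subgroupRank_closure_le_iff hq hR hnorm (fun u hu ↦ Subgroup.subset_closure (.inl hu))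
    (fun u hu him ↦ Subgroup.subset_closure (.inr ⟨hu, fun hsq ↦ him.ne' ?_⟩))
    (fun x hx ↦ hx.imp_right And.left)
  rw [← ofReal_intCast] at hsq
  exact (sq_eq_ofReal_iff_im_eq_zero (hnorm _ hu)).mp hsq

theorem stmt_10_general (q : ℤ) (hq : 2 ≤ q) (R : Finset ℂ) (hRne : R.Nonempty)
    (habs : ∀ α ∈ R, ‖α‖ ^ 2 = (q : ℝ))
    (hconj : ∀ α ∈ R, (q : ℂ) / α ∈ R)
    (hnotsmall : ∀ α₁ ∈ R, ∀ α₂ ∈ R, α₁ ≠ α₂ → ∀ n : ℕ, 0 < n → (α₁ / α₂) ^ n ≠ 1) :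
    List.TFAE
      [ (∃ e : ℂ → ℤ, AdmissibleFn q R e ∧ ¬ TrivialFn q R e),
        (∃ e : ℂ → ℤ, AdmissibleFn q R e ∧ ¬ TrivialFn q R e ∧
          ∀ β ∈ R, β ^ 2 = (q : ℂ) → e β = 0),
        (∃ e : ℂ → ℤ, ReducedAdmissible q R e),
        (∃ e : ℂ → ℤ, ReducedAdmissible q R e ∧ ∀ β ∈ R, β ^ 2 = (q : ℂ) → e β = 0),
        subgroupRank (Subgroup.closure {x : ℂˣ | (x : ℂ) ∈ R}) ≤ ((R.card / 2 : ℕ) : Cardinal),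
        subgroupRank (Subgroup.closure
            {x : ℂˣ | (x : ℂ) = (q : ℂ) ∨ ((x : ℂ) ∈ R ∧ (x : ℂ) ^ 2 ≠ (q : ℂ))}) ≤
          ((R.card / 2 : ℕ) : Cardinal) ] := by
  have hq1 : 1 < q := hq
  have hR (α) (hα : α ∈ R) : conj α ∈ R := by
    simpa [← ofReal_intCast, ofReal_div_eq_conj (habs α hα)] using hconj α hα
  have hcard : R.card / 2 = #{α ∈ R | 0 < α.im} := by
    have := card_eq_two_mul_card_im_pos_add hR
    have := card_im_eq_zero_le_one (by positivity) habs hnotsmall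
    omega
  have hdep {e} (he : AdmissibleFn q R e) (hnt : ¬ TrivialFn q R e) :=
    mulDependentModPow_of_admissibleFn hq1 hR habs hnotsmall he hnt
  have hred := exists_reducedAdmissible_of_mulDependentModPow hq1 hR habs
  have hΓ := subgroupRank_closure_preimage_le_iff hq1 hRne hR habs
  have hΓ₁ := subgroupRank_closure_nonreal_le_iff hq1 hR habs
  rw [hcard]
  tfae_have 1 → 4 := fun ⟨e, he, hnt⟩ ↦ hred (hdep he hnt)
  tfae_have 4 → 2 := fun ⟨e, he, hreal⟩ ↦ ⟨e, he.admissibleFn, he.not_trivialFn hq1, hreal⟩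
  tfae_have 2 → 1 := fun ⟨e, he, hnt, _⟩ ↦ ⟨e, he, hnt⟩
  tfae_have 4 → 3 := fun ⟨e, he, _⟩ ↦ ⟨e, he⟩
  tfae_have 3 → 1 := fun ⟨e, he⟩ ↦ ⟨e, he.admissibleFn, he.not_trivialFn hq1⟩
  tfae_have 1 → 5 := fun ⟨e, he, hnt⟩ ↦ hΓ.mpr (hdep he hnt)
  tfae_have 5 → 4 := fun h ↦ hred (hΓ.mp h)
  tfae_have 1 → 6 := fun ⟨e, he, hnt⟩ ↦ hΓ₁.mpr (hdep he hnt)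
  tfae_have 6 → 4 := fun h ↦ hred (hΓ₁.mp h)
  tfae_finish

/-- Assume `R` is not small. Then the following are equivalent:
(1a) there is a nontrivial admissible function on `R`;
(1b) there is a nontrivial admissible function on `R` vanishing identically on `R^ι`;
(2a) there is a reduced admissible function on `R`;
(2b) there is a reduced admissible function on `R` vanishing identically on `R^ι`;
(3a) the rank of `Γ` (the subgroup of `ℂˣ` generated by `R`) is at most `⌊#R/2⌋`;
(3b) the rank of `Γ₁` (the subgroup generated by `q` and `R ∖ R^ι`) is at most `⌊#R/2⌋`. -/
theorem stmt_10 (q : ℤ) (hq : 2 ≤ q) (R : Finset ℂ) (hRne : R.Nonempty)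
    (hR0 : ∀ α ∈ R, α ≠ 0)
    (habs : ∀ α ∈ R, ‖α‖ ^ 2 = (q : ℝ))
    (hconj : ∀ α ∈ R, (q : ℂ) / α ∈ R)
    (hnotsmall : ∀ α₁ ∈ R, ∀ α₂ ∈ R, α₁ ≠ α₂ → ∀ n : ℕ, 0 < n → (α₁ / α₂) ^ n ≠ 1) :
    List.TFAE
      [ (∃ e : ℂ → ℤ, AdmissibleFn q R e ∧ ¬ TrivialFn q R e),
        (∃ e : ℂ → ℤ, AdmissibleFn q R e ∧ ¬ TrivialFn q R e ∧
          ∀ β ∈ R, β ^ 2 = (q : ℂ) → e β = 0),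
        (∃ e : ℂ → ℤ, ReducedAdmissible q R e),
        (∃ e : ℂ → ℤ, ReducedAdmissible q R e ∧ ∀ β ∈ R, β ^ 2 = (q : ℂ) → e β = 0),
        subgroupRank (Subgroup.closure {x : ℂˣ | (x : ℂ) ∈ R}) ≤ ((R.card / 2 : ℕ) : Cardinal),
        subgroupRank (Subgroup.closure
            {x : ℂˣ | (x : ℂ) = (q : ℂ) ∨ ((x : ℂ) ∈ R ∧ (x : ℂ) ^ 2 ≠ (q : ℂ))}) ≤
          ((R.card / 2 : ℕ) : Cardinal) ] :=
  stmt_10_general q hq R hRne habs hconj hnotsmall
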